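/- arXiv:1902.04679 — 8 statements merged into one kernel-verified Lean document; each statement's English description precedes it below -/
import Mathlib

section
/- Let X be an n × p real data matrix with rows x₁,…,xₙ in general position and p = n−1. Let x̄ = (1/n)∑xᵢ, let X_c be the centered matrix with rows xᵢ − x̄, and let S = X_cᵀX_c/(n−1) be the (invertible) covariance matrix. Then the matrix D = X_c S⁻¹ X_cᵀ satisfies D = (n−1)(I_n − (1/n)J), where J is the n × n all-ones matrix. -/
open Matrix

theorem stmt_0 (n : ℕ) (hn : 2 ≤ n) (X : Matrix (Fin n) (Fin (n - 1)) ℝ)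
    (J : Matrix (Fin n) (Fin n) ℝ) (hJ : J = Matrix.of fun _ _ => (1 : ℝ))
    (Xc : Matrix (Fin n) (Fin (n - 1)) ℝ) (hXc : Xc = (1 - (n : ℝ)⁻¹ • J) * X)
    (S : Matrix (Fin (n - 1)) (Fin (n - 1)) ℝ)
    (hS : S = ((n : ℝ) - 1)⁻¹ • (Xcᵀ * Xc))
    (hrank : Xc.rank = n - 1) :
    Xc * S⁻¹ * Xcᵀ = ((n : ℝ) - 1) • (1 - (n : ℝ)⁻¹ • J) := by
  have hn0 : (n : ℝ) ≠ 0 := by positivity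
  have hn2 : (2 : ℝ) ≤ n := by exact_mod_cast hn
  have hn1 : (n : ℝ) - 1 ≠ 0 := by linarith
  set C : Matrix (Fin n) (Fin n) ℝ := 1 - (n : ℝ)⁻¹ • J with hC
  clear_value C
  -- basic facts about J and C
  have hJJ : J * J = (n : ℝ) • J := by
    subst hJ; ext i j
    simp [Matrix.mul_apply, Matrix.smul_apply]
  have hJT : Jᵀ = J := by subst hJ; ext i j; simp
  have hCT : Cᵀ = C := by
    simp [hC, transpose_sub, transpose_smul, hJT]
  have hAA : ((n : ℝ)⁻¹ • J) * ((n : ℝ)⁻¹ • J) = (n : ℝ)⁻¹ • J := by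
    rw [Matrix.smul_mul, Matrix.mul_smul, hJJ, smul_smul, smul_smul]
    congr 1
    field_simp
  have hCC : C * C = C := by
    rw [hC, Matrix.sub_mul, Matrix.mul_sub, Matrix.mul_sub, hAA]
    simp
  have hCXc : C * Xc = Xc := by
    rw [hXc, ← Matrix.mul_assoc, hCC]
  have hXcTC : Xcᵀ * C = Xcᵀ := by
    have := congrArg Matrix.transpose hCXc
    rwa [Matrix.transpose_mul, hCT] at this
  set G : Matrix (Fin (n - 1)) (Fin (n - 1)) ℝ := Xcᵀ * Xc with hG
  -- G is invertible
  have hGrank : G.rank = n - 1 := by rw [hG, Matrix.rank_transpose_mul_self, hrank]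
  clear_value G
  have htop : LinearMap.range G.mulVecLin = ⊤ := by
    apply Submodule.eq_top_of_finrank_eq
    rw [← Matrix.rank, hGrank, Module.finrank_fintype_fun_eq_card, Fintype.card_fin]
  have hGunit : IsUnit G := by
    rw [← Matrix.mulVec_surjective_iff_isUnit]
    have hs : Function.Surjective G.mulVecLin := LinearMap.range_eq_top.mp htop
    exact hs
  have hGdet : IsUnit G.det := (Matrix.isUnit_iff_isUnit_det G).mp hGunit
  have hGinv : G * G⁻¹ = 1 := Matrix.mul_nonsing_inv G hGdet
  have hGinv' : G⁻¹ * G = 1 := Matrix.nonsing_inv_mul G hGdet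
  have hGT : Gᵀ = G := by rw [hG, Matrix.transpose_mul, Matrix.transpose_transpose]
  have hGinvT : (G⁻¹)ᵀ = G⁻¹ := by rw [Matrix.transpose_nonsing_inv, hGT]
  set P : Matrix (Fin n) (Fin n) ℝ := Xc * G⁻¹ * Xcᵀ with hP
  clear_value P
  have hPT : Pᵀ = P := by
    rw [hP, Matrix.transpose_mul, Matrix.transpose_mul, Matrix.transpose_transpose, hGinvT,
      Matrix.mul_assoc]
  have hPXc : P * Xc = Xc := by
    rw [hP, Matrix.mul_assoc, Matrix.mul_assoc, ← hG, hGinv', Matrix.mul_one]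
  have hPP : P * P = P := by
    nth_rewrite 2 [hP]
    rw [← Matrix.mul_assoc, ← Matrix.mul_assoc, hPXc]
    exact hP.symm
  have hPC : P * C = P := by
    rw [hP, Matrix.mul_assoc, Matrix.mul_assoc, hXcTC, ← Matrix.mul_assoc]
  have hCP : C * P = P := by
    have := congrArg Matrix.transpose hPC
    rwa [Matrix.transpose_mul, hCT, hPT] at this
  set Q : Matrix (Fin n) (Fin n) ℝ := P - C with hQ
  clear_value Q
  have hQQ : Q * Q = -Q := by
    rw [hQ, Matrix.sub_mul, Matrix.mul_sub, Matrix.mul_sub, hPP, hPC, hCP, hCC]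
    abel
  -- traces
  have hcast : ((n - 1 : ℕ) : ℝ) = (n : ℝ) - 1 := by
    have h1 : 1 ≤ n := by omega
    push_cast [h1]; ring
  have htrP : P.trace = (n : ℝ) - 1 := by
    rw [hP, Matrix.trace_mul_comm, ← Matrix.mul_assoc, ← hG, hGinv, Matrix.trace_one,
      Fintype.card_fin, hcast]
  have htrJ : J.trace = (n : ℝ) := by
    subst hJ; simp [Matrix.trace, Matrix.diag]
  have htrC : C.trace = (n : ℝ) - 1 := by
    rw [hC, Matrix.trace_sub, Matrix.trace_smul, Matrix.trace_one, htrJ, Fintype.card_fin,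
      smul_eq_mul, inv_mul_cancel₀ hn0]
  have htrQ : Q.trace = 0 := by rw [hQ, Matrix.trace_sub, htrP, htrC, sub_self]
  -- Q = 0 via sum of squares
  have hQT : Qᵀ = Q := by rw [hQ, Matrix.transpose_sub, hPT, hCT]
  have hsum : ∑ i, ∑ j, (Q j i) ^ 2 = 0 := by
    have h1 : (Qᵀ * Q).trace = -Q.trace := by
      rw [hQT, hQQ, Matrix.trace_neg]
    rw [htrQ, neg_zero] at h1
    calc ∑ i, ∑ j, (Q j i) ^ 2 = (Qᵀ * Q).trace := by
          simp [Matrix.trace, Matrix.diag, Matrix.mul_apply, sq]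
      _ = 0 := h1
  have hQ0 : Q = 0 := by
    ext i j
    have hnn : ∀ i ∈ Finset.univ, (0:ℝ) ≤ ∑ j, (Q j i) ^ 2 :=
      fun i _ => Finset.sum_nonneg fun j _ => sq_nonneg _
    have h2 := (Finset.sum_eq_zero_iff_of_nonneg hnn).mp hsum j (Finset.mem_univ j)
    have hnn2 : ∀ k ∈ Finset.univ, (0:ℝ) ≤ (Q k j) ^ 2 := fun k _ => sq_nonneg _
    have h3 := (Finset.sum_eq_zero_iff_of_nonneg hnn2).mp h2 i (Finset.mem_univ i)
    simpa using (pow_eq_zero_iff (two_ne_zero)).mp h3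
  have hPCeq : P = C := by
    rw [hQ] at hQ0
    exact sub_eq_zero.mp hQ0
  -- compute S⁻¹
  have hSinv : S⁻¹ = ((n : ℝ) - 1) • G⁻¹ := by
    rw [hS]
    apply Matrix.inv_eq_right_inv
    rw [Matrix.smul_mul, Matrix.mul_smul, smul_smul, inv_mul_cancel₀ hn1, one_smul, hGinv]
  rw [hSinv, Matrix.mul_smul, Matrix.smul_mul, ← hP, hPCeq]
end

section
/- Let x₁,…,xₙ ∈ ℝ^{n−1} be points in general position, with mean x̄ and invertible sample covariance matrix S = ∑(xᵢ−x̄)(xᵢ−x̄)ᵀ/(n−1). Then for every i, the squared Mahalanobis distance of xᵢ to the mean equals (n−1)²/n, i.e., (xᵢ−x̄)ᵀS⁻¹(xᵢ−x̄) = (n−1)²/n. -/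
open Matrix

theorem stmt_1 (n : ℕ) (hn : 2 ≤ n) (x : Fin n → Fin (n - 1) → ℝ)
    (xbar : Fin (n - 1) → ℝ) (hxbar : xbar = (n : ℝ)⁻¹ • ∑ i, x i)
    (S : Matrix (Fin (n - 1)) (Fin (n - 1)) ℝ)
    (hS : S = ((n : ℝ) - 1)⁻¹ • ∑ i, vecMulVec (x i - xbar) (x i - xbar))
    (hrank : (Matrix.of fun i j => (x i - xbar) j).rank = n - 1) :
    ∀ i, (x i - xbar) ⬝ᵥ (S⁻¹ *ᵥ (x i - xbar)) = ((n : ℝ) - 1) ^ 2 / n := by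
  have hn0 : (n : ℝ) ≠ 0 := by positivity
  have hn1 : (n : ℝ) - 1 ≠ 0 := by
    have : (2 : ℝ) ≤ n := by exact_mod_cast hn
    linarith
  set y : Fin n → Fin (n - 1) → ℝ := fun i => x i - xbar with hy
  -- centered data sums to zero
  have hsum : ∑ i, y i = 0 := by
    ext j
    simp only [hy, Finset.sum_apply, Pi.sub_apply, Finset.sum_sub_distrib, Finset.sum_const,
      Finset.card_univ, Fintype.card_fin, smul_eq_mul, Pi.zero_apply, hxbar, Pi.smul_apply,
      nsmul_eq_mul]
    field_simp
    simp
  set Y : Matrix (Fin n) (Fin (n - 1)) ℝ := Matrix.of fun i j => y i j with hY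
  set G : Matrix (Fin (n - 1)) (Fin (n - 1)) ℝ := Yᵀ * Y with hG
  have hGsum : G = ∑ i, vecMulVec (y i) (y i) := by
    ext j k
    simp [hG, mul_apply, vecMulVec_apply, Matrix.sum_apply, hY, mul_comm]
  have hGrank : G.rank = n - 1 := by
    rw [hG, Matrix.rank_transpose_mul_self]; exact hrank
  -- G is invertible
  have hGdet : IsUnit G.det := by
    rw [← Matrix.isUnit_iff_isUnit_det, ← Matrix.mulVec_surjective_iff_isUnit]
    have hrange : LinearMap.range G.mulVecLin = ⊤ := by
      apply Submodule.eq_top_of_finrank_eq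
      rw [show Module.finrank ℝ (LinearMap.range G.mulVecLin) = G.rank from rfl, hGrank,
        Module.finrank_fintype_fun_eq_card, Fintype.card_fin]
    intro v
    obtain ⟨c, hc⟩ := LinearMap.range_eq_top.mp hrange v
    exact ⟨c, hc⟩
  have hGinv : G⁻¹ * G = 1 := Matrix.nonsing_inv_mul G hGdet
  have hGinv' : G * G⁻¹ = 1 := Matrix.mul_nonsing_inv G hGdet
  -- S⁻¹ = (n-1) • G⁻¹
  have hSG : S = ((n : ℝ) - 1)⁻¹ • G := by rw [hS, hGsum]
  have hSinv : S⁻¹ = ((n : ℝ) - 1) • G⁻¹ := by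
    apply Matrix.inv_eq_right_inv
    rw [hSG, Matrix.smul_mul, Matrix.mul_smul, smul_smul, inv_mul_cancel₀ hn1, one_smul, hGinv']
  -- the hat matrix
  set H : Matrix (Fin n) (Fin n) ℝ := Y * G⁻¹ * Yᵀ with hH
  set P : Matrix (Fin n) (Fin n) ℝ := 1 - (n : ℝ)⁻¹ • Matrix.of (fun _ _ => (1 : ℝ)) with hP
  -- column sums of Y vanish
  have hcol : ∀ j, ∑ i, Y i j = 0 := by
    intro j
    have := congrFun hsum j
    simpa [Finset.sum_apply, hY] using this
  -- (H - P) * Y = 0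
  have hHY : H * Y = Y := by
    have h1 : H * Y = Y * (G⁻¹ * G) := by
      rw [hH, hG, Matrix.mul_assoc, Matrix.mul_assoc]
    rw [h1, hGinv, Matrix.mul_one]
  have hJY : (Matrix.of (fun _ _ => (1 : ℝ)) : Matrix (Fin n) (Fin n) ℝ) * Y = 0 := by
    ext i j
    simp [mul_apply, hcol j]
  have hPY : P * Y = Y := by
    rw [hP, Matrix.sub_mul, Matrix.one_mul, Matrix.smul_mul, hJY, smul_zero, sub_zero]
  have hHPY : (H - P) * Y = 0 := by rw [Matrix.sub_mul, hHY, hPY, sub_self]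
  -- (H - P) *ᵥ 1 = 0
  have hYt1 : Yᵀ *ᵥ (fun _ => (1 : ℝ)) = 0 := by
    ext j
    simp [mulVec, dotProduct, hcol j]
  have hH1 : H *ᵥ (fun _ => (1 : ℝ)) = 0 := by
    rw [hH, ← Matrix.mulVec_mulVec, ← Matrix.mulVec_mulVec, hYt1, Matrix.mulVec_zero,
      Matrix.mulVec_zero]
  have hP1 : P *ᵥ (fun _ => (1 : ℝ)) = 0 := by
    rw [hP, Matrix.sub_mulVec, Matrix.one_mulVec]
    ext i
    simp only [Pi.sub_apply, Pi.smul_apply, Matrix.smul_apply, mulVec, dotProduct, Matrix.of_apply, mul_one,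
      Finset.sum_const, Finset.card_univ, Fintype.card_fin, smul_eq_mul, nsmul_eq_mul,
      Pi.zero_apply]
    field_simp
    simp
  have hHP1 : (H - P) *ᵥ (fun _ => (1 : ℝ)) = 0 := by
    rw [Matrix.sub_mulVec, hH1, hP1, sub_self]
  -- spanning argument : range Y ⊔ span{1} = ⊤
  set V := LinearMap.range Y.mulVecLin with hV
  set one_n : Fin n → ℝ := fun _ => (1 : ℝ) with hone
  set W := Submodule.span ℝ {one_n} with hW
  have hone_ne : one_n ≠ 0 := by
    intro h
    have := congrFun h ⟨0, by omega⟩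
    simp [hone] at this
  have hfinV : Module.finrank ℝ V = n - 1 := by
    rw [hV, show Module.finrank ℝ (LinearMap.range Y.mulVecLin) = Y.rank from rfl, hrank]
  have hfinW : Module.finrank ℝ W = 1 := finrank_span_singleton hone_ne
  have hVsum : ∀ v ∈ V, ∑ i, v i = 0 := by
    rintro v ⟨c, rfl⟩
    simp only [Matrix.mulVecLin_apply, mulVec, dotProduct]
    rw [Finset.sum_comm]
    simp_rw [← Finset.sum_mul, hcol]
    simp
  have hinf : V ⊓ W = ⊥ := by
    rw [eq_bot_iff]
    rintro v ⟨hv1, hv2⟩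
    obtain ⟨a, rfl⟩ := Submodule.mem_span_singleton.mp hv2
    have h1 : ∑ i, (a • one_n) i = 0 := hVsum _ hv1
    have h2 : ∑ i, (a • one_n) i = a * n := by
      simp [hone, Finset.card_univ, mul_comm]
    have : a = 0 := by
      rw [h2] at h1
      exact (mul_eq_zero.mp h1).resolve_right hn0
    simp [this]
  have hsup : V ⊔ W = ⊤ := by
    apply Submodule.eq_top_of_finrank_eq
    have := Submodule.finrank_sup_add_finrank_inf_eq V W
    rw [hinf] at this
    simp only [finrank_bot, add_zero] at this
    rw [this, hfinV, hfinW, Module.finrank_fintype_fun_eq_card, Fintype.card_fin]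
    omega
  -- (H - P) *ᵥ v = 0 for all v
  have hkill : ∀ v : Fin n → ℝ, (H - P) *ᵥ v = 0 := by
    intro v
    have hv : v ∈ V ⊔ W := hsup ▸ Submodule.mem_top
    obtain ⟨u, hu, w, hw, rfl⟩ := Submodule.mem_sup.mp hv
    obtain ⟨c, rfl⟩ := hu
    obtain ⟨a, rfl⟩ := Submodule.mem_span_singleton.mp hw
    rw [Matrix.mulVec_add, Matrix.mulVec_smul, Matrix.mulVecLin_apply, Matrix.mulVec_mulVec,
      hHPY, hHP1, Matrix.zero_mulVec, smul_zero, add_zero]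
  -- entries of H equal entries of P
  have hHP : ∀ i, H i i = 1 - (n : ℝ)⁻¹ := by
    intro i
    have := congrFun (hkill (Pi.single i 1)) i
    simp only [Matrix.mulVec_single, op_smul_eq_smul, one_smul, Matrix.col_apply, Matrix.sub_apply, mul_one, Pi.zero_apply] at this
    have hPii : P i i = 1 - (n : ℝ)⁻¹ := by simp [hP, hone]
    linarith
  intro i
  -- put everything together
  have hdot : y i ⬝ᵥ (G⁻¹ *ᵥ y i) = H i i := by
    simp only [hH, mul_apply, dotProduct, mulVec, transpose_apply, Finset.sum_mul,
      Finset.mul_sum, hY, Matrix.of_apply, dotProduct]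
    rw [Finset.sum_comm]
    exact Finset.sum_congr rfl fun j _ => Finset.sum_congr rfl fun k _ => by ring
  show y i ⬝ᵥ (S⁻¹ *ᵥ y i) = ((n : ℝ) - 1) ^ 2 / n
  rw [hSinv, Matrix.smul_mulVec, dotProduct_smul, smul_eq_mul, hdot, hHP i]
  field_simp
end

section
/- Let x₁,…,xₙ ∈ ℝ^{n−1} be points in general position, with mean x̄ and invertible sample covariance matrix S. Then for every i ≠ j, the squared Mahalanobis distance between xᵢ and xⱼ equals 2(n−1), i.e., (xᵢ−xⱼ)ᵀS⁻¹(xᵢ−xⱼ) = 2(n−1). -/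
open Matrix

theorem stmt_2 (n : ℕ) (hn : 2 ≤ n) (x : Fin n → Fin (n - 1) → ℝ)
    (xbar : Fin (n - 1) → ℝ) (hxbar : xbar = (n : ℝ)⁻¹ • ∑ i, x i)
    (S : Matrix (Fin (n - 1)) (Fin (n - 1)) ℝ)
    (hS : S = ((n : ℝ) - 1)⁻¹ • ∑ i, vecMulVec (x i - xbar) (x i - xbar))
    (hrank : (Matrix.of fun i j => (x i - xbar) j).rank = n - 1) :
    ∀ i j, i ≠ j → (x i - x j) ⬝ᵥ (S⁻¹ *ᵥ (x i - x j)) = 2 * ((n : ℝ) - 1) := by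
  intro i j hij
  have hn0 : (n : ℝ) ≠ 0 := by positivity
  have hn1 : (n : ℝ) - 1 ≠ 0 := by
    have : (2 : ℝ) ≤ (n : ℝ) := by exact_mod_cast hn
    linarith
  set M : Matrix (Fin n) (Fin (n - 1)) ℝ := Matrix.of fun i j => (x i - xbar) j with hM
  -- column sums of M are zero
  have hcol : ∀ k, ∑ i, M i k = 0 := by
    intro k
    have : ∑ i, (x i k - xbar k) = (∑ i, x i k) - n * xbar k := by
      rw [Finset.sum_sub_distrib, Finset.sum_const, Finset.card_univ, Fintype.card_fin,
        nsmul_eq_mul]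
    simp only [hM, Matrix.of_apply, Pi.sub_apply]
    rw [this, hxbar]
    simp only [Pi.smul_apply, Finset.sum_apply, smul_eq_mul]
    field_simp
    ring
  set A : Matrix (Fin (n - 1)) (Fin (n - 1)) ℝ := Mᵀ * M with hA
  have hSA : S = ((n : ℝ) - 1)⁻¹ • A := by
    rw [hS]
    congr 1
    ext a b
    simp only [hA, Matrix.mul_apply, Matrix.transpose_apply, Finset.sum_apply,
      Matrix.sum_apply, vecMulVec_apply, hM, Matrix.of_apply, Pi.sub_apply]
  have hArank : A.rank = n - 1 := by
    rw [hA, Matrix.rank_transpose_mul_self]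
    exact hrank
  -- A is invertible
  have hAunit : IsUnit A.det := by
    have hsurj : Function.Surjective A.mulVec := by
      have : LinearMap.range A.mulVecLin = ⊤ := by
        apply Submodule.eq_top_of_finrank_eq
        rw [← Matrix.rank, hArank, Module.finrank_pi, Fintype.card_fin]
      intro v
      obtain ⟨c, hc⟩ := (LinearMap.range_eq_top.mp this) v
      exact ⟨c, hc⟩
    exact Matrix.isUnit_iff_isUnit_det A |>.mp
      (Matrix.mulVec_surjective_iff_isUnit.mp hsurj)
  -- the vector u = e_i - e_j
  set u : Fin n → ℝ := Pi.single i 1 - Pi.single j 1 with hu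
  have hu_sum : ∑ k, u k = 0 := by
    simp [hu, Finset.sum_sub_distrib]
  -- u is in the range of M.mulVecLin
  have hmem : ∃ c, M *ᵥ c = u := by
    -- define the sum functional
    set φ : (Fin n → ℝ) →ₗ[ℝ] ℝ := ∑ k, LinearMap.proj k with hφ
    have hφ_apply : ∀ v, φ v = ∑ k, v k := by
      intro v; simp [hφ]
    have hφ_ne : φ ≠ 0 := by
      intro h
      have h1 := hφ_apply (fun _ => (1 : ℝ))
      rw [h] at h1
      simp at h1
      exact hn0 h1.symm
    have hker : Module.finrank ℝ (LinearMap.ker φ) = n - 1 := by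
      have := Module.Dual.finrank_ker_add_one_of_ne_zero (f := φ) hφ_ne
      rw [Module.finrank_pi, Fintype.card_fin] at this
      omega
    have hle : LinearMap.range M.mulVecLin ≤ LinearMap.ker φ := by
      rintro v ⟨c, rfl⟩
      rw [LinearMap.mem_ker, hφ_apply]
      simp only [Matrix.mulVecLin_apply, Matrix.mulVec, dotProduct]
      rw [Finset.sum_comm]
      simp only [← Finset.sum_mul]
      simp [hcol]
    have hfr : Module.finrank ℝ (LinearMap.range M.mulVecLin) = n - 1 := hrank
    have heq : LinearMap.range M.mulVecLin = LinearMap.ker φ := by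
      apply Submodule.eq_of_le_of_finrank_le hle
      rw [hker, hfr]
    have humem : u ∈ LinearMap.ker φ := by
      rw [LinearMap.mem_ker, hφ_apply]
      exact hu_sum
    rw [← heq] at humem
    obtain ⟨c, hc⟩ := humem
    exact ⟨c, hc⟩
  obtain ⟨c, hc⟩ := hmem
  -- x i - x j = Mᵀ *ᵥ u
  have hd : x i - x j = Mᵀ *ᵥ u := by
    ext k
    simp only [Matrix.mulVec, dotProduct, Matrix.transpose_apply, hu, Pi.sub_apply,
      mul_sub]
    rw [Finset.sum_sub_distrib]
    simp only [Pi.single_apply, mul_ite, mul_one, mul_zero]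
    rw [Finset.sum_ite_eq' Finset.univ i (fun b => M b k),
      Finset.sum_ite_eq' Finset.univ j (fun b => M b k)]
    simp [hM]
  -- hence x i - x j = A *ᵥ c
  have hdA : x i - x j = A *ᵥ c := by
    rw [hd, ← hc, hA, ← Matrix.mulVec_mulVec]
  -- S⁻¹ = (n-1) • A⁻¹
  have hSinv : S⁻¹ = ((n : ℝ) - 1) • A⁻¹ := by
    apply Matrix.inv_eq_left_inv
    rw [hSA, Matrix.smul_mul, Matrix.mul_smul, smul_smul,
      Matrix.nonsing_inv_mul A hAunit, mul_inv_cancel₀ hn1, one_smul]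
  have hAinv : A⁻¹ *ᵥ (x i - x j) = c := by
    rw [hdA, Matrix.mulVec_mulVec, Matrix.nonsing_inv_mul A hAunit, Matrix.one_mulVec]
  rw [hSinv, Matrix.smul_mulVec, hAinv]
  rw [dotProduct_smul]
  have huu : (x i - x j) ⬝ᵥ c = 2 := by
    rw [hd, Matrix.mulVec_transpose, ← Matrix.dotProduct_mulVec, hc]
    simp only [hu, dotProduct, Pi.sub_apply, Pi.single_apply]
    have key : ∀ k : Fin n, ((if k = i then (1:ℝ) else 0) - if k = j then 1 else 0) *
        ((if k = i then (1:ℝ) else 0) - if k = j then 1 else 0) =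
        (if k = i then 1 else 0) + (if k = j then 1 else 0) := by
      intro k
      by_cases h1 : k = i
      · have h2 : ¬ k = j := by rw [h1]; exact hij
        simp only [h1, h2, if_pos rfl, if_neg hij, if_neg (Ne.symm hij)]
        norm_num
      · by_cases h2 : k = j
        · simp only [h1, h2, if_pos rfl, if_neg (Ne.symm hij), if_neg hij]
          norm_num
        · simp [h1, h2]
    rw [Finset.sum_congr rfl (fun k _ => key k), Finset.sum_add_distrib]
    norm_num
  rw [huu, smul_eq_mul]
  ring
end

section
/- Let x₁,…,xₙ ∈ ℝ^{n−1} be points in general position with mean x̄ and invertible covariance S, and let S^{−1/2} be any matrix with S^{−1/2}S^{−1/2} = S⁻¹ (and S^{−1/2} symmetric). Define zᵢ = S^{−1/2}(xᵢ − x̄). Then the zᵢ form the vertices of a regular simplex: ‖zᵢ‖² = (n−1)²/n for all i and ‖zᵢ − zⱼ‖² = 2(n−1) for all i ≠ j. -/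
open Matrix

-- Auxiliary: a square matrix with full rank is a unit (has unit det)
lemma aux_isUnit_det_of_rank {m : ℕ} (A : Matrix (Fin m) (Fin m) ℝ) (h : A.rank = m) :
    IsUnit A.det := by
  rw [← Matrix.isUnit_iff_isUnit_det, ← Matrix.mulVec_surjective_iff_isUnit]
  have hr : LinearMap.range A.mulVecLin = ⊤ := by
    apply Submodule.eq_top_of_finrank_eq
    rw [Module.finrank_fin_fun]
    exact h
  intro v
  have := hr ▸ Submodule.mem_top (x := v) (R := ℝ)
  obtain ⟨w, hw⟩ := this
  exact ⟨w, hw⟩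

lemma aux_ker (n : ℕ) (hn : 2 ≤ n) (B : Matrix (Fin (n-1)) (Fin n) ℝ)
    (hB : B.rank = n - 1) (h1 : B *ᵥ (fun _ => (1:ℝ)) = 0)
    (v : Fin n → ℝ) (hv : B *ᵥ v = 0) : ∃ a : ℝ, v = fun _ => a := by
  have hrn := LinearMap.finrank_range_add_finrank_ker B.mulVecLin
  rw [Module.finrank_fin_fun] at hrn
  have hrank' : Module.finrank ℝ (LinearMap.range B.mulVecLin) = n - 1 := hB
  rw [hrank'] at hrn
  have hker : Module.finrank ℝ (LinearMap.ker B.mulVecLin) = 1 := by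
    omega
  have hone : (fun _ => (1:ℝ)) ∈ (LinearMap.ker B.mulVecLin) := h1
  have hne : (fun _ => (1:ℝ)) ≠ (0 : Fin n → ℝ) := by
    intro h
    have := congrFun h ⟨0, by omega⟩
    norm_num at this
  have hspan : (ℝ ∙ (fun _ => (1:ℝ) : Fin n → ℝ)) = (LinearMap.ker B.mulVecLin) := by
    apply Submodule.eq_of_le_of_finrank_eq
    · rwa [Submodule.span_singleton_le_iff_mem]
    · rw [finrank_span_singleton hne, hker]
  have hvK : v ∈ (LinearMap.ker B.mulVecLin) := hv
  rw [← hspan, Submodule.mem_span_singleton] at hvK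
  obtain ⟨a, ha⟩ := hvK
  exact ⟨a, by rw [← ha]; ext i; simp⟩

open Matrix

theorem stmt_3 (n : ℕ) (hn : 2 ≤ n) (x : Fin n → Fin (n - 1) → ℝ)
    (xbar : Fin (n - 1) → ℝ) (hxbar : xbar = (n : ℝ)⁻¹ • ∑ i, x i)
    (S : Matrix (Fin (n - 1)) (Fin (n - 1)) ℝ)
    (hS : S = ((n : ℝ) - 1)⁻¹ • ∑ i, vecMulVec (x i - xbar) (x i - xbar))
    (hrank : (Matrix.of fun i j => (x i - xbar) j).rank = n - 1)
    (R : Matrix (Fin (n - 1)) (Fin (n - 1)) ℝ)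
    (hRsym : Rᵀ = R) (hR : R * R = S⁻¹)
    (z : Fin n → Fin (n - 1) → ℝ) (hz : ∀ i, z i = R *ᵥ (x i - xbar)) :
    (∀ i, z i ⬝ᵥ z i = ((n : ℝ) - 1) ^ 2 / n) ∧
    (∀ i j, i ≠ j → (z i - z j) ⬝ᵥ (z i - z j) = 2 * ((n : ℝ) - 1)) := by
  have hn0 : (n : ℝ) ≠ 0 := by positivity
  set c : ℝ := (n : ℝ) - 1 with hc
  have hc0 : c ≠ 0 := by
    have : (2 : ℝ) ≤ (n : ℝ) := by exact_mod_cast hn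
    rw [hc]; linarith
  set y : Fin n → Fin (n - 1) → ℝ := fun i => x i - xbar with hy
  set M : Matrix (Fin n) (Fin (n - 1)) ℝ := Matrix.of fun i j => (x i - xbar) j with hM
  -- sum of centered vectors is zero
  have hsum : ∀ k, ∑ i, y i k = 0 := by
    intro k
    have : ∑ i, y i k = (∑ i, x i k) - n * xbar k := by
      simp [hy, Finset.sum_sub_distrib, Pi.sub_apply]
    rw [this, hxbar]
    simp [Finset.sum_apply]
    field_simp
    ring
  have hMy : ∀ i k, M i k = y i k := fun i k => rfl
  -- Mᵀ * M = c • S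
  have hMtM : Mᵀ * M = c • S := by
    rw [hS, smul_smul, mul_inv_cancel₀ hc0, one_smul]
    ext k l
    simp [mul_apply, Matrix.sum_apply, vecMulVec_apply, hM]
  have hSsym : Sᵀ = S := by
    have : S = c⁻¹ • (Mᵀ * M) := by rw [hMtM, smul_smul, inv_mul_cancel₀ hc0, one_smul]
    rw [this, transpose_smul, transpose_mul, transpose_transpose]
  -- S is invertible
  have hMtMdet : IsUnit (Mᵀ * M).det := by
    apply aux_isUnit_det_of_rank
    rw [Matrix.rank_transpose_mul_self]
    exact hrank
  have hSdet : IsUnit S.det := by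
    have hSeq : S = c⁻¹ • (Mᵀ * M) := by rw [hMtM, smul_smul, inv_mul_cancel₀ hc0, one_smul]
    rw [hSeq, Matrix.det_smul]
    exact (IsUnit.pow _ (isUnit_iff_ne_zero.mpr (inv_ne_zero hc0))).mul hMtMdet
  have hSinv : S⁻¹ * S = 1 := Matrix.nonsing_inv_mul S hSdet
  have hSinvsym : (S⁻¹)ᵀ = S⁻¹ := by rw [Matrix.transpose_nonsing_inv, hSsym]
  -- all-ones matrix
  set J : Matrix (Fin n) (Fin n) ℝ := Matrix.of fun _ _ => (1:ℝ) with hJ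
  have hJM : J * M = 0 := by
    ext i k
    simp only [mul_apply, hJ, of_apply, one_mul, Matrix.zero_apply]
    exact hsum k
  have hMtJ : Mᵀ * J = 0 := by
    ext k i
    simp only [mul_apply, hJ, of_apply, mul_one, transpose_apply, Matrix.zero_apply]
    exact hsum k
  have hJJ : J * J = (n : ℝ) • J := by
    ext i j
    simp [mul_apply, hJ]
  set G : Matrix (Fin n) (Fin n) ℝ := M * S⁻¹ * Mᵀ with hG
  set P : Matrix (Fin n) (Fin n) ℝ := c • ((1 : Matrix (Fin n) (Fin n) ℝ) - (n:ℝ)⁻¹ • J) with hP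
  have hGM : G * M = c • M := by
    rw [hG, Matrix.mul_assoc, Matrix.mul_assoc, hMtM, Matrix.mul_smul, hSinv,
      Matrix.mul_smul, Matrix.mul_one]
  have hPM : P * M = c • M := by
    rw [hP, Matrix.smul_mul, Matrix.sub_mul, Matrix.one_mul, Matrix.smul_mul, hJM, smul_zero,
      sub_zero]
  have hGJ : G * J = 0 := by
    rw [hG, Matrix.mul_assoc, hMtJ, Matrix.mul_zero]
  have hPJ : P * J = 0 := by
    rw [hP, Matrix.smul_mul, Matrix.sub_mul, Matrix.one_mul, Matrix.smul_mul, hJJ, smul_smul,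
      inv_mul_cancel₀ hn0, one_smul, sub_self, smul_zero]
  set D : Matrix (Fin n) (Fin n) ℝ := G - P with hD
  have hJsym : Jᵀ = J := by ext i j; simp [hJ]
  have hDsym : Dᵀ = D := by
    rw [hD, transpose_sub]
    congr 1
    · rw [hG, transpose_mul, transpose_mul, transpose_transpose, hSinvsym, Matrix.mul_assoc]
    · rw [hP, transpose_smul, transpose_sub, transpose_one, transpose_smul, hJsym]
  have hDM : D * M = 0 := by rw [hD, Matrix.sub_mul, hGM, hPM, sub_self]
  have hDJ : D * J = 0 := by rw [hD, Matrix.sub_mul, hGJ, hPJ, sub_self]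
  have hMtD : Mᵀ * D = 0 := by
    have : (D * M)ᵀ = 0 := by rw [hDM, transpose_zero]
    rwa [transpose_mul, hDsym] at this
  have hJD : J * D = 0 := by
    have : (D * J)ᵀ = 0 := by rw [hDJ, transpose_zero]
    rw [transpose_mul, hDsym] at this
    rwa [hJsym] at this
  -- D = 0 via kernel argument
  have hD0 : D = 0 := by
    have hone : Mᵀ *ᵥ (fun _ => (1:ℝ)) = 0 := by
      ext k
      simp only [mulVec, dotProduct, transpose_apply, mul_one, Pi.zero_apply]
      exact hsum k
    ext i j
    have hcol : Mᵀ *ᵥ (fun i => D i j) = 0 := by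
      ext k
      have : (Mᵀ * D) k j = (0 : Matrix (Fin (n-1)) (Fin n) ℝ) k j := by rw [hMtD]
      simpa [mul_apply, mulVec, dotProduct] using this
    obtain ⟨a, ha⟩ := aux_ker n hn Mᵀ (by rw [Matrix.rank_transpose]; exact hrank)
      hone (fun i => D i j) hcol
    have hcolsum : ∑ k, D k j = 0 := by
      have : (J * D) ⟨0, by omega⟩ j = (0 : Matrix (Fin n) (Fin n) ℝ) ⟨0, by omega⟩ j := by
        rw [hJD]
      simpa [mul_apply, hJ] using this
    have ha2 : ∀ i, D i j = a := fun i => congrFun ha i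
    have : (n : ℝ) * a = 0 := by
      rw [← hcolsum]
      simp [ha2]
    have ha0 : a = 0 := by
      rcases mul_eq_zero.mp this with h | h
      · exact absurd h hn0
      · exact h
    simp [ha2 i, ha0]
  have hGP : G = P := sub_eq_zero.mp hD0
  -- dot products equal entries of G
  have hGij : ∀ i j, z i ⬝ᵥ z j = G i j := by
    intro i j
    rw [hz, hz]
    have h1 : R *ᵥ (x i - xbar) = (x i - xbar) ᵥ* R := by
      conv_lhs => rw [← hRsym]
      rw [Matrix.mulVec_transpose]
    rw [h1, Matrix.dotProduct_mulVec, Matrix.vecMul_vecMul, hR]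
    rfl
  have hPii : ∀ i : Fin n, P i i = c * (1 - (n:ℝ)⁻¹) := by
    intro i
    simp [hP, hJ, Matrix.one_apply_eq]
  have hPij : ∀ i j : Fin n, i ≠ j → P i j = c * (0 - (n:ℝ)⁻¹) := by
    intro i j hij
    simp [hP, hJ, Matrix.one_apply_ne hij]
  constructor
  · intro i
    rw [hGij i i, hGP, hPii i, hc]
    field_simp
  · intro i j hij
    have expand : (z i - z j) ⬝ᵥ (z i - z j) =
        z i ⬝ᵥ z i - z i ⬝ᵥ z j - z j ⬝ᵥ z i + z j ⬝ᵥ z j := by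
      rw [sub_dotProduct, dotProduct_sub, dotProduct_sub]
      ring
    rw [expand, hGij i i, hGij i j, hGij j i, hGij j j, hGP, hPii i, hPii j,
      hPij i j hij, hPij j i (Ne.symm hij), hc]
    field_simp
    ring
end

section
/- For any n points x₁,…,xₙ in ℝ^p whose sample covariance matrix S = ∑(xᵢ−x̄)(xᵢ−x̄)ᵀ/(n−1) is invertible, the squared Mahalanobis distance of each point to the mean is bounded: (xᵢ−x̄)ᵀS⁻¹(xᵢ−x̄) ≤ (n−1)²/n for every i. -/
open Matrix

theorem stmt_4 (n p : ℕ) (hn : 2 ≤ n) (x : Fin n → Fin p → ℝ)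
    (xbar : Fin p → ℝ) (hxbar : xbar = (n : ℝ)⁻¹ • ∑ i, x i)
    (S : Matrix (Fin p) (Fin p) ℝ)
    (hS : S = ((n : ℝ) - 1)⁻¹ • ∑ i, vecMulVec (x i - xbar) (x i - xbar))
    (hSpd : S.PosDef) :
    ∀ i, (x i - xbar) ⬝ᵥ (S⁻¹ *ᵥ (x i - xbar)) ≤ ((n : ℝ) - 1) ^ 2 / n := by
  intro k
  have hn0 : (0:ℝ) < n := by positivity
  have hn2 : (2:ℝ) ≤ n := by exact_mod_cast hn
  have hn1 : (0:ℝ) < (n:ℝ) - 1 := by linarith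
  set y : Fin n → Fin p → ℝ := fun i => x i - xbar with hy
  -- centered data sums to zero
  have hsum : ∑ i, y i = 0 := by
    funext j
    simp only [hy, hxbar, Finset.sum_apply, Pi.sub_apply, Pi.smul_apply, Pi.zero_apply,
      smul_eq_mul, Finset.sum_sub_distrib, Finset.sum_const, Finset.card_univ,
      Fintype.card_fin, nsmul_eq_mul]
    field_simp
    ring
  set v : Fin p → ℝ := S⁻¹ *ᵥ y k with hv
  set c : Fin n → ℝ := fun i => v ⬝ᵥ y i with hc
  have hdet : IsUnit S.det := isUnit_iff_ne_zero.mpr hSpd.det_pos.ne'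
  have hSv : S *ᵥ v = y k := by
    rw [hv, mulVec_mulVec, mul_nonsing_inv _ hdet, one_mulVec]
  set D : ℝ := c k with hD
  -- the goal equals D
  have hgoal : (x k - xbar) ⬝ᵥ (S⁻¹ *ᵥ (x k - xbar)) = D := by
    show y k ⬝ᵥ v = D
    rw [show D = v ⬝ᵥ y k from rfl, dotProduct_comm]
  have h0 : 0 ≤ y k ⬝ᵥ (S⁻¹ *ᵥ y k) := by
    simpa using hSpd.inv.posSemidef.re_dotProduct_nonneg (y k)
  have hD0 : 0 ≤ D := by
    rw [show D = v ⬝ᵥ y k from rfl, dotProduct_comm]; exact h0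
  -- sum of c's is zero
  have hcsum : ∑ i, c i = 0 := by
    have h1 : ∑ i, c i = ∑ j, v j * (∑ i, y i) j := by
      simp only [hc, dotProduct, Finset.sum_apply, Finset.mul_sum]
      rw [Finset.sum_comm]
    rw [h1, hsum]
    simp
  -- sum of squares
  have hsq : ∑ i, (c i) ^ 2 = ((n:ℝ) - 1) * D := by
    have h1 : v ⬝ᵥ (S *ᵥ v) = D := by
      rw [hSv]
    have hsplit : (∑ i, vecMulVec (y i) (y i)) *ᵥ v = ∑ i, (vecMulVec (y i) (y i)) *ᵥ v := by
      funext j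
      simp only [mulVec, dotProduct, Finset.sum_apply, Matrix.sum_apply, Finset.sum_mul]
      rw [Finset.sum_comm]
    have hvmv : ∀ i, (vecMulVec (y i) (y i)) *ᵥ v = (y i ⬝ᵥ v) • y i := by
      intro i
      funext j
      simp only [mulVec, vecMulVec_apply, dotProduct, Pi.smul_apply, smul_eq_mul,
        Finset.sum_mul]
      exact Finset.sum_congr rfl fun l _ => by ring
    have hdps : v ⬝ᵥ (∑ i, (y i ⬝ᵥ v) • y i) = ∑ i, v ⬝ᵥ ((y i ⬝ᵥ v) • y i) := by
      simp only [dotProduct, Finset.sum_apply, Finset.mul_sum]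
      rw [Finset.sum_comm]
    have h2 : v ⬝ᵥ (S *ᵥ v) = ((n:ℝ) - 1)⁻¹ * ∑ i, (c i) ^ 2 := by
      rw [hS, smul_mulVec, dotProduct_smul, smul_eq_mul, hsplit]
      simp_rw [hvmv]
      rw [hdps]
      congr 1
      refine Finset.sum_congr rfl fun i _ => ?_
      rw [dotProduct_smul, smul_eq_mul, dotProduct_comm (y i) v]
      show c i * c i = (c i) ^ 2
      ring
    rw [h1] at h2
    field_simp at h2
    linarith [h2]
  -- Cauchy-Schwarz on the complement of k
  have hcs : D ^ 2 ≤ ((n:ℝ) - 1) * (∑ i ∈ Finset.univ.erase k, (c i) ^ 2) := by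
    have hcard : (Finset.univ.erase k).card = n - 1 := by
      rw [Finset.card_erase_of_mem (Finset.mem_univ k)]
      simp
    have h := Finset.sum_mul_sq_le_sq_mul_sq (Finset.univ.erase k) c (fun _ => (1:ℝ))
    have hsum' : ∑ i ∈ Finset.univ.erase k, c i = -D := by
      have h2 := Finset.sum_erase_add Finset.univ c (Finset.mem_univ k)
      rw [hcsum] at h2
      have : c k = D := rfl
      linarith [h2]
    simp only [mul_one, one_pow] at h
    rw [hsum'] at h
    have hcard' : ∑ _i ∈ Finset.univ.erase k, (1:ℝ) = (n:ℝ) - 1 := by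
      rw [Finset.sum_const, hcard]
      have h1n : (1:ℕ) ≤ n := by omega
      rw [nsmul_eq_mul, Nat.cast_sub h1n]
      push_cast
      ring
    rw [hcard'] at h
    calc D ^ 2 = (-D) ^ 2 := by ring
    _ ≤ (∑ i ∈ Finset.univ.erase k, (c i) ^ 2) * ((n:ℝ) - 1) := h
    _ = ((n:ℝ) - 1) * (∑ i ∈ Finset.univ.erase k, (c i) ^ 2) := by ring
  have herase : ∑ i ∈ Finset.univ.erase k, (c i) ^ 2 = ((n:ℝ) - 1) * D - D ^ 2 := by
    have h2 := Finset.sum_erase_add Finset.univ (fun i => (c i)^2) (Finset.mem_univ k)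
    rw [hsq] at h2
    have hck : (c k) ^ 2 = D ^ 2 := rfl
    simp only [hck] at h2
    linarith [h2]
  rw [herase] at hcs
  rw [hgoal]
  rw [le_div_iff₀ hn0]
  nlinarith [hcs, hD0, hn1, sq_nonneg D]
end

section
/- For any n points x₁,…,xₙ in ℝ^p whose sample covariance matrix S is invertible, the squared Mahalanobis distance between any two points is bounded: (xᵢ−xⱼ)ᵀS⁻¹(xᵢ−xⱼ) ≤ 2(n−1) for every i ≠ j. -/
open Matrix

theorem dot_vecMulVec {p : ℕ} (u a : Fin p → ℝ) :
    a ⬝ᵥ ((vecMulVec u u) *ᵥ a) = (u ⬝ᵥ a)^2 := by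
  have h : vecMulVec u u *ᵥ a = (u ⬝ᵥ a) • u := by
    funext k
    simp only [mulVec, vecMulVec_apply, dotProduct, Pi.smul_apply, smul_eq_mul,
      Finset.sum_mul, Finset.mul_sum]
    exact Finset.sum_congr rfl fun l _ => by ring
  rw [h, dotProduct_smul, smul_eq_mul, dotProduct_comm, sq]

theorem sum_mulVec' {n p : ℕ} (M : Fin n → Matrix (Fin p) (Fin p) ℝ) (a : Fin p → ℝ) :
    (∑ i, M i) *ᵥ a = ∑ i, (M i *ᵥ a) := by
  funext k
  simp only [mulVec, dotProduct, Matrix.sum_apply, Finset.sum_apply, Finset.sum_mul]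
  rw [Finset.sum_comm]

theorem dotProduct_sum' {n p : ℕ} (a : Fin p → ℝ) (v : Fin n → Fin p → ℝ) :
    a ⬝ᵥ (∑ i, v i) = ∑ i, a ⬝ᵥ v i := by
  simp only [dotProduct, Finset.sum_apply, Finset.mul_sum]
  rw [Finset.sum_comm]

theorem stmt_5 (n p : ℕ) (hn : 2 ≤ n) (x : Fin n → Fin p → ℝ)
    (xbar : Fin p → ℝ) (hxbar : xbar = (n : ℝ)⁻¹ • ∑ i, x i)
    (S : Matrix (Fin p) (Fin p) ℝ)
    (hS : S = ((n : ℝ) - 1)⁻¹ • ∑ i, vecMulVec (x i - xbar) (x i - xbar))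
    (hSpd : S.PosDef) :
    ∀ i j, i ≠ j → (x i - x j) ⬝ᵥ (S⁻¹ *ᵥ (x i - x j)) ≤ 2 * ((n : ℝ) - 1) := by
  intro i j hij
  have hn1 : (1:ℝ) ≤ (n:ℝ) - 1 := by
    have : (2:ℝ) ≤ (n:ℝ) := by exact_mod_cast hn
    linarith
  have hne : ((n:ℝ) - 1) ≠ 0 := by linarith
  set d : Fin p → ℝ := x i - x j with hd
  set a : Fin p → ℝ := S⁻¹ *ᵥ d with ha
  have hSa : S *ᵥ a = d := by
    rw [ha, mulVec_mulVec, Matrix.mul_nonsing_inv _ (isUnit_iff_isUnit_det S |>.1 hSpd.isUnit),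
      one_mulVec]
  set y : Fin n → ℝ := fun k => (x k - xbar) ⬝ᵥ a with hy
  have hform : a ⬝ᵥ (S *ᵥ a) = ((n:ℝ) - 1)⁻¹ * ∑ k, (y k)^2 := by
    rw [hS, smul_mulVec, dotProduct_smul, smul_eq_mul]
    congr 1
    rw [sum_mulVec', dotProduct_sum']
    exact Finset.sum_congr rfl fun k _ => dot_vecMulVec _ _
  have had : a ⬝ᵥ d = y i - y j := by
    have hdd : d = (x i - xbar) - (x j - xbar) := by rw [hd]; abel
    rw [hdd, dotProduct_sub, hy]
    simp [dotProduct_comm]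
  have hsq : (y i - y j)^2 ≤ 2 * ∑ k, (y k)^2 := by
    have h2 : (y i)^2 + (y j)^2 ≤ ∑ k, (y k)^2 := by
      have hsub : ({i, j} : Finset (Fin n)) ⊆ Finset.univ := Finset.subset_univ _
      have := Finset.sum_le_sum_of_subset_of_nonneg hsub
        (fun k _ _ => sq_nonneg (y k))
      rwa [Finset.sum_pair hij] at this
    nlinarith [sq_nonneg (y i + y j)]
  have hQ0 : 0 ≤ a ⬝ᵥ d := by
    have h0 := hSpd.inv.posSemidef.re_dotProduct_nonneg d
    simp only [RCLike.re_to_real] at h0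
    rw [dotProduct_comm]
    simpa using h0
  have hkey : (a ⬝ᵥ d)^2 ≤ 2 * ((n:ℝ) - 1) * (a ⬝ᵥ d) := by
    calc (a ⬝ᵥ d)^2 = (y i - y j)^2 := by rw [had]
      _ ≤ 2 * ∑ k, (y k)^2 := hsq
      _ = 2 * ((n:ℝ) - 1) * (((n:ℝ) - 1)⁻¹ * ∑ k, (y k)^2) := by
          field_simp
      _ = 2 * ((n:ℝ) - 1) * (a ⬝ᵥ (S *ᵥ a)) := by rw [hform]
      _ = 2 * ((n:ℝ) - 1) * (a ⬝ᵥ d) := by rw [hSa]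
  have hgoal : d ⬝ᵥ (S⁻¹ *ᵥ d) = a ⬝ᵥ d := by rw [← ha, dotProduct_comm]
  rw [hgoal]
  nlinarith [hkey, hQ0, hn1]
end

section
/- In the setting of the previous statement (Z the standardized n × (n−1) data matrix of points in general position, Y an n × 2 matrix with 𝟙ᵀY = 0 and YᵀY = (n−1)I₂, and U = ZᵀY/(n−1)), we have ZU = Y. In particular, every centered standardized planar configuration Y is exactly an orthogonal projection of the standardized data. -/
open Matrix

theorem stmt_11 (n : ℕ) (hn : 2 ≤ n) (x : Fin n → Fin (n - 1) → ℝ)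
    (xbar : Fin (n - 1) → ℝ) (hxbar : xbar = (n : ℝ)⁻¹ • ∑ i, x i)
    (S : Matrix (Fin (n - 1)) (Fin (n - 1)) ℝ)
    (hS : S = ((n : ℝ) - 1)⁻¹ • ∑ i, vecMulVec (x i - xbar) (x i - xbar))
    (hrank : (Matrix.of fun i j => (x i - xbar) j).rank = n - 1)
    (R : Matrix (Fin (n - 1)) (Fin (n - 1)) ℝ)
    (hRsym : Rᵀ = R) (hR : R * R = S⁻¹)
    (Z : Matrix (Fin n) (Fin (n - 1)) ℝ) (hZ : Z = Matrix.of fun i j => (R *ᵥ (x i - xbar)) j)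
    (Y : Matrix (Fin n) (Fin 2) ℝ)
    (hYc : ∀ k, ∑ i, Y i k = 0) (hY : Yᵀ * Y = ((n : ℝ) - 1) • 1)
    (U : Matrix (Fin (n - 1)) (Fin 2) ℝ) (hU : U = ((n : ℝ) - 1)⁻¹ • (Zᵀ * Y)) :
    Z * U = Y := by
  have hnR : (n : ℝ) ≠ 0 := by positivity
  have hc : ((n : ℝ) - 1) ≠ 0 := by
    have h2 : (2 : ℝ) ≤ (n : ℝ) := by exact_mod_cast hn
    linarith
  set X : Matrix (Fin n) (Fin (n - 1)) ℝ := Matrix.of fun i j => (x i - xbar) j with hX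
  -- columns of X sum to zero
  have hcol : ∀ j, ∑ i, X i j = 0 := by
    intro j
    have hxb : xbar j = (n : ℝ)⁻¹ * ∑ i, x i j := by
      rw [hxbar]; simp [Finset.sum_apply]
    simp only [hX, Matrix.of_apply, Pi.sub_apply, Finset.sum_sub_distrib, Finset.sum_const,
      Finset.card_univ, Fintype.card_fin, nsmul_eq_mul, hxb]
    field_simp
    ring
  -- Z = X * R
  have hRs : ∀ a b, R a b = R b a := by
    intro a b
    conv_lhs => rw [← hRsym]
    rfl
  have hZX : Z = X * R := by
    rw [hZ]
    ext i j
    simp only [Matrix.of_apply, Matrix.mul_apply, Matrix.mulVec, dotProduct, hX]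
    exact Finset.sum_congr rfl fun k _ => by rw [hRs j k, mul_comm]
  -- S = c⁻¹ • (Xᵀ * X)
  have hSX : S = ((n : ℝ) - 1)⁻¹ • (Xᵀ * X) := by
    rw [hS]
    congr 1
    ext j k
    simp only [Matrix.sum_apply, Matrix.vecMulVec_apply, Matrix.mul_apply, Matrix.transpose_apply,
      hX, Matrix.of_apply]
  -- X has full column rank, so mulVecLin is injective
  have hXinj : Function.Injective X.mulVecLin := by
    rw [← LinearMap.ker_eq_bot]
    have h1 := X.mulVecLin.finrank_range_add_finrank_ker
    have h2 : Module.finrank ℝ (Fin (n - 1) → ℝ) = n - 1 := by simp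
    have h3 : Module.finrank ℝ (LinearMap.range X.mulVecLin) = n - 1 := hrank
    rw [h2, h3] at h1
    have h4 : Module.finrank ℝ (LinearMap.ker X.mulVecLin) = 0 := by omega
    exact Submodule.finrank_eq_zero.mp h4
  -- Xᵀ * X is invertible
  have hGunit : IsUnit (Xᵀ * X) := by
    rw [← Matrix.mulVec_injective_iff_isUnit]
    have key : ∀ v, (Xᵀ * X) *ᵥ v = 0 → v = 0 := by
      intro v hv
      have h0 : (X *ᵥ v) ⬝ᵥ (X *ᵥ v) = 0 := by
        have h1 : v ⬝ᵥ ((Xᵀ * X) *ᵥ v) = 0 := by rw [hv]; simp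
        rwa [← Matrix.mulVec_mulVec, Matrix.dotProduct_mulVec, Matrix.vecMul_transpose] at h1
      have h2 : X *ᵥ v = 0 := dotProduct_self_eq_zero.mp h0
      have := hXinj (a₁ := v) (a₂ := 0) (by simpa using h2)
      exact this
    intro v w hvw
    have : (Xᵀ * X) *ᵥ (v - w) = 0 := by
      rw [Matrix.mulVec_sub, hvw, sub_self]
    have := key _ this
    exact sub_eq_zero.mp this
  have hGdet : IsUnit (Xᵀ * X).det := (Matrix.isUnit_iff_isUnit_det _).mp hGunit
  -- S⁻¹ = c • (Xᵀ*X)⁻¹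
  have hSinv : S⁻¹ = ((n : ℝ) - 1) • (Xᵀ * X)⁻¹ := by
    apply Matrix.inv_eq_right_inv
    rw [hSX, Matrix.smul_mul, Matrix.mul_smul, smul_smul, inv_mul_cancel₀ hc,
      Matrix.mul_nonsing_inv _ hGdet, one_smul]
  have hRR : R * R = ((n : ℝ) - 1) • (Xᵀ * X)⁻¹ := hR.trans hSinv
  -- each column of Y is in the range of X
  have hrange : LinearMap.range X.mulVecLin = LinearMap.ker (∑ i, LinearMap.proj (R := ℝ)
      (φ := fun _ : Fin n => ℝ) i) := by
    set l : (Fin n → ℝ) →ₗ[ℝ] ℝ := ∑ i, LinearMap.proj i with hl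
    have hlapp : ∀ y : Fin n → ℝ, l y = ∑ i, y i := by
      intro y; simp [hl]
    apply Submodule.eq_of_le_of_finrank_le
    · rintro _ ⟨v, rfl⟩
      rw [LinearMap.mem_ker, hlapp]
      simp only [Matrix.mulVecLin_apply, Matrix.mulVec, dotProduct]
      rw [Finset.sum_comm]
      simp only [← Finset.sum_mul]
      simp [hcol]
    · have h1 := l.finrank_range_add_finrank_ker
      have hlsurj : Function.Surjective l := by
        intro c
        refine ⟨fun _ => c / n, ?_⟩
        rw [hlapp]
        simp [Finset.sum_const, Finset.card_univ]
        field_simp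
      have h2 : LinearMap.range l = ⊤ := LinearMap.range_eq_top.mpr hlsurj
      rw [h2] at h1
      simp only [finrank_top, Module.finrank_self, Module.finrank_pi, Fintype.card_fin] at h1
      have h3 : Module.finrank ℝ (LinearMap.range X.mulVecLin) = n - 1 := hrank
      rw [h3]
      omega
  have hYcol : ∀ k : Fin 2, ∃ w, X *ᵥ w = fun i => Y i k := by
    intro k
    have : (fun i => Y i k) ∈ LinearMap.ker (∑ i, LinearMap.proj (R := ℝ)
        (φ := fun _ : Fin n => ℝ) i) := by
      rw [LinearMap.mem_ker]
      simpa using hYc k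
    rw [← hrange] at this
    obtain ⟨w, hw⟩ := this
    exact ⟨w, hw⟩
  choose W hW using hYcol
  set Wm : Matrix (Fin (n - 1)) (Fin 2) ℝ := Matrix.of fun j k => W k j with hWm
  have hYX : Y = X * Wm := by
    ext i k
    have := congrFun (hW k) i
    rw [Matrix.mul_apply, ← this]
    simp [Matrix.mulVec, dotProduct, hWm]
  -- final computation
  have key : Z * Zᵀ * Y = ((n : ℝ) - 1) • Y := by
    conv_lhs => rw [hZX, Matrix.transpose_mul, hRsym, hYX]
    calc X * R * (R * Xᵀ) * (X * Wm)
        = X * (R * R) * Xᵀ * (X * Wm) := by simp only [Matrix.mul_assoc]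
      _ = X * (((n : ℝ) - 1) • (Xᵀ * X)⁻¹) * Xᵀ * (X * Wm) := by rw [hRR]
      _ = ((n : ℝ) - 1) • (X * ((Xᵀ * X)⁻¹ * ((Xᵀ * X) * Wm))) := by
          simp only [Matrix.mul_smul, Matrix.smul_mul, Matrix.mul_assoc]
      _ = ((n : ℝ) - 1) • (X * Wm) := by
          rw [← Matrix.mul_assoc ((Xᵀ * X)⁻¹) (Xᵀ * X) Wm, Matrix.nonsing_inv_mul _ hGdet,
            Matrix.one_mul]
      _ = ((n : ℝ) - 1) • Y := by rw [← hYX]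
  rw [hU, Matrix.mul_smul, ← Matrix.mul_assoc, key, smul_smul, inv_mul_cancel₀ hc, one_smul]
end

section
/- Let X be an n × p data matrix with p ≥ n−1 and rows in general position (rank of the centered matrix equals n−1). Then for every n × 2 matrix Y of rank 2 with centered columns, there exist a p × 2 matrix Q with orthonormal columns (QᵀQ = I₂), an invertible 2 × 2 matrix A, and b ∈ ℝ² such that XQ = YA + 𝟙bᵀ. That is, some orthogonal 2-dimensional projection of X is an affine image of Y. -/
open Matrix

theorem stmt_12 (n p : ℕ) (hn : 2 ≤ n) (hp : n - 1 ≤ p)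
    (X : Matrix (Fin n) (Fin p) ℝ)
    (J : Matrix (Fin n) (Fin n) ℝ) (hJ : J = Matrix.of fun _ _ => (1 : ℝ))
    (hrank : ((1 - (n : ℝ)⁻¹ • J) * X).rank = n - 1)
    (Y : Matrix (Fin n) (Fin 2) ℝ)
    (hYrank : Y.rank = 2) (hYc : ∀ k, ∑ i, Y i k = 0) :
    ∃ Q : Matrix (Fin p) (Fin 2) ℝ, Qᵀ * Q = 1 ∧
      ∃ A : Matrix (Fin 2) (Fin 2) ℝ, IsUnit A.det ∧
        ∃ b : Fin 2 → ℝ, X * Q = Y * A + Matrix.of (fun _ k => b k) := by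
  classical
  have hn0 : (n : ℝ) ≠ 0 := Nat.cast_ne_zero.mpr (by omega)
  set Xc : Matrix (Fin n) (Fin p) ℝ := (1 - (n : ℝ)⁻¹ • J) * X with hXcdef
  -- the sum functional
  let sumF : (Fin n → ℝ) →ₗ[ℝ] ℝ :=
    { toFun := fun v => ∑ i, v i
      map_add' := fun u v => by simp [Finset.sum_add_distrib]
      map_smul' := fun c v => by simp [Finset.mul_sum] }
  have hsumF : ∀ v : Fin n → ℝ, sumF v = ∑ i, v i := fun _ => rfl
  have hsurj : Function.Surjective sumF := by
    intro r
    refine ⟨fun _ => r / n, ?_⟩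
    rw [hsumF]
    rw [Finset.sum_const, Finset.card_univ, Fintype.card_fin, nsmul_eq_mul]
    field_simp
  have hkerF : Module.finrank ℝ (LinearMap.ker sumF) = n - 1 := by
    have h1 : Module.finrank ℝ (LinearMap.range sumF) = 1 := by
      rw [LinearMap.range_eq_top.mpr hsurj]
      simp
    have h2 := LinearMap.finrank_range_add_finrank_ker sumF
    rw [h1, Module.finrank_fintype_fun_eq_card, Fintype.card_fin] at h2
    omega
  -- centered columns of Xc
  have hXcij : ∀ i j, Xc i j = X i j - (n : ℝ)⁻¹ * ∑ k, X k j := by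
    intro i j
    simp [hXcdef, hJ, Matrix.sub_mul, Matrix.smul_mul, Matrix.sub_apply,
      Matrix.smul_apply, Matrix.mul_apply, smul_eq_mul]
    rw [← Finset.mul_sum]
  have hcol : ∀ j, ∑ i, Xc i j = 0 := by
    intro j
    simp only [hXcij]
    rw [Finset.sum_sub_distrib, Finset.sum_const, Finset.card_univ, Fintype.card_fin,
      nsmul_eq_mul]
    field_simp
    ring
  have hle : LinearMap.range Xc.mulVecLin ≤ LinearMap.ker sumF := by
    rintro v ⟨u, rfl⟩
    rw [LinearMap.mem_ker, hsumF]
    simp only [Matrix.mulVecLin_apply, Matrix.mulVec, dotProduct]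
    rw [Finset.sum_comm]
    simp [← Finset.sum_mul, hcol]
  have hrankXc : Module.finrank ℝ (LinearMap.range Xc.mulVecLin) = n - 1 := hrank
  have hrangeXc : LinearMap.range Xc.mulVecLin = LinearMap.ker sumF := by
    refine Submodule.eq_of_le_of_finrank_le hle ?_
    rw [hkerF, hrankXc]
  -- columns of Y are independent
  have hYinj : LinearMap.ker Y.mulVecLin = ⊥ := by
    have h2 : Module.finrank ℝ (LinearMap.range Y.mulVecLin) = 2 := hYrank
    have h := LinearMap.finrank_range_add_finrank_ker Y.mulVecLin
    rw [h2, Module.finrank_fintype_fun_eq_card, Fintype.card_fin] at h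
    exact Submodule.finrank_eq_zero.mp (by omega)
  have hYcols : LinearIndependent ℝ (fun k : Fin 2 => fun i => Y i k) := by
    have hb := (Pi.basisFun ℝ (Fin 2)).linearIndependent
    have h2 := hb.map' Y.mulVecLin hYinj
    convert h2 using 1
    funext k
    funext i
    simp [Matrix.mulVecLin_apply, Matrix.mulVec, dotProduct, Pi.basisFun_apply,
      Pi.single_apply, mul_ite]
    rfl
    rfl
  -- choose preimages
  have hYmem : ∀ k : Fin 2, (fun i => Y i k) ∈ LinearMap.range Xc.mulVecLin := by
    intro k
    rw [hrangeXc, LinearMap.mem_ker, hsumF]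
    exact hYc k
  choose wv hwv using fun k => LinearMap.mem_range.mp (hYmem k)
  have hwli : LinearIndependent ℝ wv := by
    apply LinearIndependent.of_comp Xc.mulVecLin
    convert hYcols using 1
    funext k
    exact hwv k
    rfl
  -- move to Euclidean space
  let E := EuclideanSpace ℝ (Fin p)
  let wE : Fin 2 → E := fun k => WithLp.toLp 2 (wv k)
  have hwEli : LinearIndependent ℝ wE := hwli.map' (WithLp.linearEquiv 2 ℝ (Fin p → ℝ)).symm.toLinearMap (by simp)
  set S : Submodule ℝ E := Submodule.span ℝ (Set.range wE) with hSdef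
  have hScard : Module.finrank ℝ S = 2 := by
    rw [hSdef, finrank_span_eq_card hwEli, Fintype.card_fin]
  let ob : OrthonormalBasis (Fin 2) ℝ S := (stdOrthonormalBasis ℝ S).reindex (finCongr hScard)
  let Q : Matrix (Fin p) (Fin 2) ℝ := Matrix.of fun i k => ((ob k : E) i)
  have hQorth : ∀ k l, ∑ i, (ob k : E) i * (ob l : E) i = if k = l then 1 else 0 := by
    intro k l
    have h := (orthonormal_iff_ite.mp ob.orthonormal) k l
    rw [Submodule.coe_inner, PiLp.inner_apply] at h
    simpa [RCLike.inner_apply, starRingEnd_apply, mul_comm] using h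
  have hQ : Qᵀ * Q = 1 := by
    ext k l
    rw [Matrix.mul_apply, Matrix.one_apply]
    simpa [Q, Matrix.transpose_apply] using hQorth k l
  have hmem : ∀ j : Fin 2, wE j ∈ S := fun j => Submodule.subset_span ⟨j, rfl⟩
  let R : Matrix (Fin 2) (Fin 2) ℝ := Matrix.of fun k j => ob.repr ⟨wE j, hmem j⟩ k
  have hWQR : ∀ i j, wE j i = ∑ k, Q i k * R k j := by
    intro i j
    have h := ob.sum_repr ⟨wE j, hmem j⟩
    have h2 : wE j = ((∑ k, ob.repr ⟨wE j, hmem j⟩ k • ob k : S) : E) := by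
      rw [h]
    have h3 : ((∑ k, ob.repr ⟨wE j, hmem j⟩ k • ob k : S) : E)
        = ∑ k, ob.repr ⟨wE j, hmem j⟩ k • (ob k : E) := by
      push_cast
      rfl
    rw [h2, h3]
    rw [WithLp.ofLp_sum, Finset.sum_apply]
    refine Finset.sum_congr rfl fun k _ => ?_
    rw [PiLp.smul_apply, smul_eq_mul, mul_comm]
    rfl
  -- R is invertible
  have hsubli : LinearIndependent ℝ (fun j : Fin 2 => (⟨wE j, hmem j⟩ : S)) := by
    apply LinearIndependent.of_comp S.subtype
    convert hwEli using 1
    rfl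
  have hRunit : IsUnit R.det := by
    rw [← Matrix.isUnit_iff_isUnit_det, ← Matrix.linearIndependent_cols_iff_isUnit]
    have h2 := hsubli.map' (ob.repr.toLinearEquiv.trans (WithLp.linearEquiv 2 ℝ (Fin 2 → ℝ))).toLinearMap (LinearEquiv.ker _)
    convert h2 using 1
    rfl
    rfl
    rfl
  -- assemble
  let W : Matrix (Fin p) (Fin 2) ℝ := Matrix.of fun i j => wv j i
  have hW : W = Q * R := by
    ext i j
    rw [Matrix.mul_apply]
    exact hWQR i j
  have hXcW : Xc * W = Y := by
    ext i k
    have h := congrFun (hwv k) i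
    simpa [Matrix.mul_apply, Matrix.mulVecLin_apply, Matrix.mulVec, dotProduct,
      W, mul_comm] using h
  set M : Matrix (Fin n) (Fin 2) ℝ := X * W with hMdef
  let c : Fin 2 → ℝ := fun k => (n : ℝ)⁻¹ * ∑ i, M i k
  have hXW : X * W = Y + Matrix.of (fun _ k => c k) := by
    have hexp : Xc * W = X * W - (n : ℝ)⁻¹ • (J * (X * W)) := by
      rw [hXcdef, Matrix.mul_assoc, Matrix.sub_mul, Matrix.one_mul, Matrix.smul_mul]
    rw [hXcW] at hexp
    have hJM : (n : ℝ)⁻¹ • (J * (X * W)) = Matrix.of (fun _ k => c k) := by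
      ext i k
      simp [hJ, Matrix.smul_apply, Matrix.mul_apply, c, hMdef, smul_eq_mul]
    rw [hJM] at hexp
    rw [hexp]
    abel
  have hRR : R * R⁻¹ = 1 := Matrix.mul_nonsing_inv R hRunit
  refine ⟨Q, hQ, R⁻¹, ?_, fun k => ∑ l, c l * R⁻¹ l k, ?_⟩
  · rw [Matrix.det_nonsing_inv, Ring.inverse_eq_inv]
    exact isUnit_iff_ne_zero.mpr (inv_ne_zero (isUnit_iff_ne_zero.mp hRunit))
  · have h1 : X * Q = (X * W) * R⁻¹ := by
      rw [hW, ← Matrix.mul_assoc X Q R, Matrix.mul_assoc (X * Q) R R⁻¹, hRR, Matrix.mul_one]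
    have h2 : (Matrix.of (fun _ k => c k) : Matrix (Fin n) (Fin 2) ℝ) * R⁻¹
        = Matrix.of (fun _ k => ∑ l, c l * R⁻¹ l k) := by
      ext i k
      rw [Matrix.mul_apply]
      rfl
    rw [h1, hXW, Matrix.add_mul, h2]
end
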